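/- arXiv:2501.06895 — 2 statements merged into one kernel-verified Lean document; each statement's English description precedes it below -/
import Mathlib

section
/- Let m ≥ 1 and let θ_1, …, θ_m be independent real random variables such that θ_i has the exponential distribution with rate ν_i, where λ_* ≤ ν_i ≤ λ^* for all i. Then for every t ≥ 0, P(θ_1 + … + θ_m < t) ≤ Λ^m · (1/(m−1)!) ∫_0^{λ_* t} u^{m−1} e^{−u} du, i.e. the distribution function of the hypoexponential sum is bounded by Λ^m times the distribution function of the Erlang (Gamma) distribution with shape m and rate λ_*. -/
open MeasureTheory ProbabilityTheory Real Set intervalIntegral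
open scoped ENNReal

namespace HypoExpAux


noncomputable def F (lam : ℝ) (n : ℕ) (t : ℝ) : ℝ :=
  if 0 < t then 1 - Real.exp (-(lam * t)) * ∑ k ∈ Finset.range n, (lam * t) ^ k / (k.factorial : ℝ)
  else 0

lemma measurable_F (lam : ℝ) (n : ℕ) : Measurable (F lam n) := by
  unfold F
  apply Measurable.ite measurableSet_Ioi _ measurable_const
  fun_prop

lemma F_of_nonpos {lam : ℝ} {n : ℕ} {t : ℝ} (ht : t ≤ 0) : F lam n t = 0 := by
  simp [F, not_lt.2 ht]

lemma F_nonneg {lam : ℝ} (hlam : 0 ≤ lam) (n : ℕ) (t : ℝ) : 0 ≤ F lam n t := by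
  unfold F
  split_ifs with h
  · have hx : 0 ≤ lam * t := mul_nonneg hlam h.le
    have h1 : ∑ k ∈ Finset.range n, (lam * t) ^ k / (k.factorial : ℝ) ≤ Real.exp (lam * t) :=
      Real.sum_le_exp_of_nonneg hx n
    have h2 : Real.exp (-(lam * t)) * ∑ k ∈ Finset.range n, (lam * t) ^ k / (k.factorial : ℝ)
        ≤ Real.exp (-(lam * t)) * Real.exp (lam * t) :=
      mul_le_mul_of_nonneg_left h1 (Real.exp_nonneg _)
    rw [← Real.exp_add] at h2
    simp at h2
    linarith
  · exact le_refl 0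

lemma F_le_one {lam : ℝ} (hlam : 0 ≤ lam) (n : ℕ) (t : ℝ) : F lam n t ≤ 1 := by
  unfold F
  split_ifs with h
  · have : 0 ≤ Real.exp (-(lam * t)) * ∑ k ∈ Finset.range n, (lam * t) ^ k / (k.factorial : ℝ) := by
      apply mul_nonneg (Real.exp_nonneg _)
      apply Finset.sum_nonneg
      intro k _
      have hx : 0 ≤ lam * t := mul_nonneg hlam h.le
      positivity
    linarith
  · norm_num

lemma exponentialPDFReal_eq_ite (r x : ℝ) :
    exponentialPDFReal r x = if 0 ≤ x then r * Real.exp (-(r * x)) else 0 := by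
  rw [exponentialPDFReal, gammaPDFReal]
  simp only [rpow_one, Real.Gamma_one, div_one, sub_self, Real.rpow_zero, mul_one]

/-- The fundamental convolution step. -/
lemma conv_step (lam : ℝ) (hlam : 0 < lam) (n : ℕ) (t : ℝ) :
    ∫⁻ s, exponentialPDF lam s * ENNReal.ofReal (F lam n (t - s)) =
      ENNReal.ofReal (F lam (n + 1) t) := by
  set g : ℝ → ℝ := fun s => exponentialPDFReal lam s * F lam n (t - s) with hg
  have hg_nonneg : ∀ s, 0 ≤ g s := fun s =>
    mul_nonneg (exponentialPDFReal_nonneg hlam s) (F_nonneg hlam.le n _)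
  have hg_meas : Measurable g :=
    (measurable_exponentialPDFReal lam).mul
      ((measurable_F lam n).comp (measurable_const.sub measurable_id))
  have h0 : ∀ s, exponentialPDF lam s * ENNReal.ofReal (F lam n (t - s)) =
      ENNReal.ofReal (g s) := by
    intro s
    rw [exponentialPDF, ← ENNReal.ofReal_mul (exponentialPDFReal_nonneg hlam s)]
  have hsupp : ∀ s, s ∉ Icc 0 t → g s = 0 := by
    intro s hs
    rw [Set.mem_Icc, not_and_or] at hs
    rcases hs with hs | hs
    · rw [hg]
      simp only
      rw [exponentialPDFReal_eq_ite, if_neg hs, zero_mul]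
    · rw [hg]
      simp only
      rw [F_of_nonpos (by push_neg at hs; linarith), mul_zero]
  have hg_ind : g = Set.indicator (Icc 0 t) g := by
    ext s
    rw [Set.indicator_apply]
    split_ifs with h
    · rfl
    · exact hsupp s h
  have hbound : ∀ s, ‖g s‖ ≤ lam := by
    intro s
    rw [Real.norm_eq_abs, abs_of_nonneg (hg_nonneg s)]
    have h1 : exponentialPDFReal lam s ≤ lam := by
      rw [exponentialPDFReal_eq_ite]
      split_ifs with h
      · calc lam * Real.exp (-(lam * s)) ≤ lam * 1 := by
              apply mul_le_mul_of_nonneg_left _ hlam.le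
              rw [Real.exp_le_one_iff]
              have : 0 ≤ lam * s := mul_nonneg hlam.le h
              linarith
          _ = lam := mul_one lam
      · exact hlam.le
    calc g s ≤ exponentialPDFReal lam s * 1 :=
          mul_le_mul_of_nonneg_left (F_le_one hlam.le n _) (exponentialPDFReal_nonneg hlam s)
      _ = exponentialPDFReal lam s := mul_one _
      _ ≤ lam := h1
  have hint : Integrable g (volume : Measure ℝ) := by
    rw [hg_ind, integrable_indicator_iff measurableSet_Icc]
    apply Measure.integrableOn_of_bounded (by simp : volume (Icc 0 t) ≠ ⊤)
      hg_meas.aestronglyMeasurable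
    exact ae_of_all _ fun s => hbound s
  have hlhs : ∫⁻ s, exponentialPDF lam s * ENNReal.ofReal (F lam n (t - s)) =
      ENNReal.ofReal (∫ s, g s) := by
    simp_rw [h0]
    rw [← ofReal_integral_eq_lintegral_ofReal hint (ae_of_all _ hg_nonneg)]
  rw [hlhs]
  congr 1
  -- now a real computation
  rcases le_or_gt t 0 with ht | ht
  · have : g = fun _ => 0 := by
      funext s
      rcases le_or_gt 0 s with hs | hs
      · rw [hg]; simp only
        rw [F_of_nonpos (by linarith), mul_zero]
      · rw [hg]; simp only
        rw [exponentialPDFReal_eq_ite, if_neg (not_le.2 hs), zero_mul]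
    rw [this, F_of_nonpos ht]
    simp
  · -- t > 0
    have hIcc : ∫ s, g s = ∫ s in (0:ℝ)..t, g s := by
      calc ∫ s, g s = ∫ s, (Icc 0 t).indicator g s := by rw [← hg_ind]
        _ = ∫ s in Icc 0 t, g s := integral_indicator measurableSet_Icc
        _ = ∫ s in Ioc 0 t, g s := integral_Icc_eq_integral_Ioc
        _ = ∫ s in (0:ℝ)..t, g s := (intervalIntegral.integral_of_le ht.le).symm
    rw [hIcc]
    set h : ℝ → ℝ := fun s => lam * Real.exp (-(lam * s)) -
      ∑ k ∈ Finset.range n,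
        (lam ^ (k+1) * Real.exp (-(lam * t)) / (k.factorial : ℝ)) * (t - s) ^ k with hh
    have hcongr : ∫ s in (0:ℝ)..t, g s = ∫ s in (0:ℝ)..t, h s := by
      apply intervalIntegral.integral_congr_ae
      have h_ae : ∀ᵐ s : ℝ, s ≠ t := by
        rw [ae_iff]
        have : {s : ℝ | ¬s ≠ t} = {t} := by ext s; simp
        rw [this]
        exact Real.volume_singleton
      filter_upwards [h_ae] with s hne hs
      rw [Set.uIoc_of_le ht.le, Set.mem_Ioc] at hs
      have hst : s < t := lt_of_le_of_ne hs.2 hne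
      have hs0 : (0:ℝ) < s := hs.1
      rw [hg, hh]
      simp only
      rw [exponentialPDFReal_eq_ite, if_pos hs0.le]
      unfold F
      rw [if_pos (by linarith : 0 < t - s)]
      have hexp : Real.exp (-(lam * s)) * Real.exp (-(lam * (t - s))) =
          Real.exp (-(lam * t)) := by
        rw [← Real.exp_add]
        ring_nf
      rw [mul_sub, mul_one]
      simp only [Finset.mul_sum]
      congr 1
      apply Finset.sum_congr rfl
      intro k _
      rw [mul_pow]
      calc lam * Real.exp (-(lam * s)) *
            (Real.exp (-(lam * (t - s))) * (lam ^ k * (t - s) ^ k / (k.factorial : ℝ))) =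
          (Real.exp (-(lam * s)) * Real.exp (-(lam * (t - s)))) *
            (lam * (lam ^ k * (t - s) ^ k / (k.factorial : ℝ))) := by ring
        _ = lam ^ (k+1) * Real.exp (-(lam * t)) / (k.factorial : ℝ) * (t - s) ^ k := by
            rw [hexp]; ring
    rw [hcongr, hh]
    have hc1 : IntervalIntegrable (fun s => lam * Real.exp (-(lam * s))) volume 0 t := by
      apply Continuous.intervalIntegrable; fun_prop
    have hc2 : ∀ k : ℕ, IntervalIntegrable
        (fun s => (lam ^ (k+1) * Real.exp (-(lam * t)) / (k.factorial : ℝ)) * (t - s) ^ k)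
        volume 0 t := by
      intro k
      apply Continuous.intervalIntegrable; fun_prop
    have hc3 : IntervalIntegrable (fun s => ∑ k ∈ Finset.range n,
        (lam ^ (k+1) * Real.exp (-(lam * t)) / (k.factorial : ℝ)) * (t - s) ^ k) volume 0 t := by
      apply Continuous.intervalIntegrable
      apply continuous_finset_sum
      intro k _
      fun_prop
    rw [intervalIntegral.integral_sub hc1 hc3]
    have hpart1 : ∫ s in (0:ℝ)..t, lam * Real.exp (-(lam * s)) = 1 - Real.exp (-(lam * t)) := by
      have := intervalIntegral.integral_eq_sub_of_hasDerivAt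
        (f := fun s : ℝ => -Real.exp (-(lam * s)))
        (f' := fun s : ℝ => lam * Real.exp (-(lam * s)))
        (fun s _ => hasDerivAt_neg_exp_mul_exp) hc1
      rw [this]
      simp
      ring
    have hpart2 : ∫ s in (0:ℝ)..t, (∑ k ∈ Finset.range n,
        (lam ^ (k+1) * Real.exp (-(lam * t)) / (k.factorial : ℝ)) * (t - s) ^ k) =
        ∑ k ∈ Finset.range n,
          (lam ^ (k+1) * Real.exp (-(lam * t)) / (k.factorial : ℝ)) * (t ^ (k+1) / ((k:ℝ)+1)) := by
      rw [intervalIntegral.integral_finset_sum (fun k _ => hc2 k)]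
      apply Finset.sum_congr rfl
      intro k _
      rw [intervalIntegral.integral_const_mul]
      congr 1
      have := intervalIntegral.integral_comp_sub_left (a := (0:ℝ)) (b := t)
        (fun u : ℝ => u ^ k) t
      rw [this]
      simp only [sub_self, sub_zero]
      rw [integral_pow]
      simp
    rw [hpart1, hpart2]
    unfold F
    rw [if_pos ht]
    rw [Finset.sum_range_succ' (fun k => (lam * t) ^ k / (k.factorial : ℝ)) n]
    have hsum : ∑ k ∈ Finset.range n,
        (lam ^ (k+1) * Real.exp (-(lam * t)) / (k.factorial : ℝ)) * (t ^ (k+1) / ((k:ℝ)+1)) =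
        Real.exp (-(lam * t)) * ∑ k ∈ Finset.range n,
          (lam * t) ^ (k+1) / ((k+1).factorial : ℝ) := by
      rw [Finset.mul_sum]
      apply Finset.sum_congr rfl
      intro k _
      have hfac : ((k+1).factorial : ℝ) = ((k:ℝ)+1) * (k.factorial : ℝ) := by
        rw [Nat.factorial_succ]; push_cast; ring
      have hk0 : (k.factorial : ℝ) ≠ 0 := Nat.cast_ne_zero.2 (Nat.factorial_ne_zero k)
      have hk1 : ((k:ℝ)+1) ≠ 0 := by positivity
      rw [hfac, mul_pow]
      field_simp
    rw [hsum]
    simp only [pow_zero, Nat.factorial_zero, Nat.cast_one]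
    ring


lemma F_if (lam : ℝ) (n : ℕ) (t : ℝ) : F lam n t =
  if 0 < t then 1 - Real.exp (-(lam * t)) * ∑ k ∈ Finset.range n, (lam * t) ^ k / (k.factorial : ℝ)
  else 0 := rfl


lemma hasDerivAt_aux (n : ℕ) (u : ℝ) :
    HasDerivAt (fun u : ℝ => -(u ^ (n+1) * Real.exp (-u)))
      (u ^ (n+1) * Real.exp (-u) - ((n:ℝ)+1) * u ^ n * Real.exp (-u)) u := by
  have h1 : HasDerivAt (fun u : ℝ => u ^ (n+1)) (((n:ℝ)+1) * u ^ n) u := by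
    simpa using (hasDerivAt_pow (n+1) u)
  have h2 : HasDerivAt (fun u : ℝ => Real.exp (-u)) (-Real.exp (-u)) u := by
    simpa using ((hasDerivAt_neg u).exp)
  have := (h1.mul h2).neg
  exact this.congr_deriv (by ring)

lemma integral_pow_mul_exp_neg (n : ℕ) (x : ℝ) :
    (∫ u in (0:ℝ)..x, u ^ n * Real.exp (-u)) =
      (n.factorial : ℝ) *
        (1 - Real.exp (-x) * ∑ k ∈ Finset.range (n+1), x ^ k / (k.factorial : ℝ)) := by
  induction n with
  | zero =>
      simp only [pow_zero, one_mul]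
      rw [intervalIntegral.integral_comp_neg (fun u => Real.exp u)]
      simp [integral_exp, Real.exp_zero]
  | succ n ih =>
      have hcont : ∀ m : ℕ, IntervalIntegrable (fun u : ℝ => u ^ m * Real.exp (-u)) volume 0 x := by
        intro m
        apply Continuous.intervalIntegrable
        fun_prop
      have key : (∫ u in (0:ℝ)..x,
          (u ^ (n+1) * Real.exp (-u) - ((n:ℝ)+1) * u ^ n * Real.exp (-u))) =
          -(x ^ (n+1) * Real.exp (-x)) - -(0 ^ (n+1) * Real.exp (-(0:ℝ))) := by
        apply intervalIntegral.integral_eq_sub_of_hasDerivAt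
        · intro u _
          exact hasDerivAt_aux n u
        · apply Continuous.intervalIntegrable
          fun_prop
      rw [intervalIntegral.integral_sub (hcont (n+1)) (by
            have := (hcont n).const_mul ((n:ℝ)+1)
            simpa [mul_assoc] using this)] at key
      have hmul : (∫ u in (0:ℝ)..x, ((n:ℝ)+1) * u ^ n * Real.exp (-u)) =
          ((n:ℝ)+1) * ∫ u in (0:ℝ)..x, u ^ n * Real.exp (-u) := by
        rw [← intervalIntegral.integral_const_mul]
        congr 1
        ext u
        ring
      rw [hmul, ih] at key
      have hx : (∫ u in (0:ℝ)..x, u ^ (n+1) * Real.exp (-u)) =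
          ((n:ℝ)+1) * ((n.factorial : ℝ) *
            (1 - Real.exp (-x) * ∑ k ∈ Finset.range (n+1), x ^ k / (k.factorial : ℝ)))
          - (x ^ (n+1) * Real.exp (-x)) - 0 := by
        simp at key ⊢
        linarith
      rw [hx]
      rw [Finset.sum_range_succ (fun k => x ^ k / (k.factorial : ℝ)) (n+1)]
      have hfac : ((n+1).factorial : ℝ) = ((n:ℝ)+1) * (n.factorial : ℝ) := by
        rw [Nat.factorial_succ]
        push_cast
        ring
      have hne : (n.factorial : ℝ) ≠ 0 := Nat.cast_ne_zero.2 (Nat.factorial_ne_zero n)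
      rw [hfac]
      field_simp
      ring



lemma expMeasure_eq_withDensity (r : ℝ) :
    expMeasure r = (volume : Measure ℝ).withDensity (exponentialPDF r) := rfl

lemma measurable_exponentialPDF (r : ℝ) : Measurable (exponentialPDF r) :=
  (measurable_exponentialPDFReal r).ennreal_ofReal

lemma exponentialPDF_le {lam Lam νi : ℝ} (hlam : 0 < lam) (hLam : 1 ≤ Lam)
    (h1 : lam ≤ νi) (h2 : νi ≤ Lam * lam) (s : ℝ) :
    exponentialPDF νi s ≤ ENNReal.ofReal Lam * exponentialPDF lam s := by
  rw [exponentialPDF, exponentialPDF, exponentialPDFReal_eq_ite, exponentialPDFReal_eq_ite,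
    ← ENNReal.ofReal_mul (by linarith : (0:ℝ) ≤ Lam)]
  apply ENNReal.ofReal_le_ofReal
  split_ifs with h
  · have hexp : Real.exp (-(νi * s)) ≤ Real.exp (-(lam * s)) := by
      apply Real.exp_le_exp.2
      have : lam * s ≤ νi * s := mul_le_mul_of_nonneg_right h1 h
      linarith
    calc νi * Real.exp (-(νi * s)) ≤ (Lam * lam) * Real.exp (-(lam * s)) :=
          mul_le_mul h2 hexp (Real.exp_nonneg _) (by positivity)
      _ = Lam * (lam * Real.exp (-(lam * s))) := by ring
  · simp

/-- The main induction: bound on the hypoexponential CDF as product measure. -/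
lemma pi_bound (lam Lam : ℝ) (hlam : 0 < lam) (hLam : 1 ≤ Lam) :
    ∀ (n : ℕ) (ν : Fin n → ℝ), (∀ i, lam ≤ ν i ∧ ν i ≤ Lam * lam) → ∀ t : ℝ,
    Measure.pi (fun i => expMeasure (ν i)) {x | ∑ i, x i < t} ≤
      ENNReal.ofReal (Lam ^ n * F lam n t) := by
  intro n
  induction n with
  | zero =>
      intro ν _ t
      haveI : ∀ i : Fin 0, SigmaFinite (expMeasure (ν i)) := fun i => i.elim0
      have hset : {x : Fin 0 → ℝ | ∑ i, x i < t} = if 0 < t then univ else ∅ := by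
        split_ifs with h
        · ext x; simp [h]
        · ext x; simp [h]
      rw [hset, F_if]
      split_ifs with h
      · rw [Measure.pi_univ]
        simp
      · simp
  | succ n ih =>
      intro ν hν t
      haveI : ∀ i, IsProbabilityMeasure (expMeasure (ν i)) := fun i =>
        isProbabilityMeasure_expMeasure (lt_of_lt_of_le hlam (hν i).1)
      set μ : ∀ _ : Fin (n+1), Measure ℝ := fun i => expMeasure (ν i) with hμ
      set κ : Measure (Fin n → ℝ) :=
        Measure.pi (fun j : Fin n => expMeasure (ν (Fin.succAbove 0 j))) with hκ
      have hmp := measurePreserving_piFinSuccAbove μ 0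
      set e := MeasurableEquiv.piFinSuccAbove (fun _ : Fin (n+1) => ℝ) 0 with he
      have hS : MeasurableSet {x : Fin (n+1) → ℝ | ∑ i, x i < t} :=
        measurableSet_lt (Finset.measurable_sum _ fun i _ => measurable_pi_apply i)
          measurable_const
      have hT : MeasurableSet {p : ℝ × (Fin n → ℝ) | p.1 + ∑ j, p.2 j < t} :=
        measurableSet_lt (measurable_fst.add
          (Finset.measurable_sum _ fun j _ => (measurable_pi_apply j).comp measurable_snd))
          measurable_const
      have hpre : e.symm ⁻¹' {x : Fin (n+1) → ℝ | ∑ i, x i < t} =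
          {p : ℝ × (Fin n → ℝ) | p.1 + ∑ j, p.2 j < t} := by
        ext ⟨s, y⟩
        simp only [Set.mem_preimage, Set.mem_setOf_eq]
        rw [Fin.sum_univ_succAbove _ 0]
        have h1 : (e.symm (s, y)) 0 = s := by
          simp [he, MeasurableEquiv.piFinSuccAbove]
        have h2 : ∀ j, (e.symm (s, y)) (Fin.succAbove 0 j) = y j := by
          intro j
          simp [he, MeasurableEquiv.piFinSuccAbove]
        rw [h1]
        have h3 : ∑ j, (e.symm (s, y)) (Fin.succAbove 0 j) = ∑ j, y j :=
          Finset.sum_congr rfl fun j _ => h2 j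
        rw [h3]
      have step1 : Measure.pi μ {x : Fin (n+1) → ℝ | ∑ i, x i < t} =
          ((μ 0).prod κ) {p : ℝ × (Fin n → ℝ) | p.1 + ∑ j, p.2 j < t} := by
        rw [← hpre]
        exact ((hmp.symm e).measure_preimage hS.nullMeasurableSet).symm
      have hslice : ∀ s : ℝ, Prod.mk s ⁻¹' {p : ℝ × (Fin n → ℝ) | p.1 + ∑ j, p.2 j < t} =
          {y : Fin n → ℝ | ∑ j, y j < t - s} := by
        intro s
        ext y
        simp only [Set.mem_preimage, Set.mem_setOf_eq]
        constructor <;> intro h <;> linarith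
      have step2 : ((μ 0).prod κ) {p : ℝ × (Fin n → ℝ) | p.1 + ∑ j, p.2 j < t} =
          ∫⁻ s, κ {y : Fin n → ℝ | ∑ j, y j < t - s} ∂(μ 0) := by
        rw [Measure.prod_apply hT]
        simp_rw [hslice]
      set G : ℝ → ℝ≥0∞ := fun s => ENNReal.ofReal (Lam ^ n * F lam n (t - s)) with hG
      have hG_meas : Measurable G :=
        (measurable_const.mul ((measurable_F lam n).comp
          (measurable_const.sub measurable_id))).ennreal_ofReal
      have step3 : (∫⁻ s, κ {y : Fin n → ℝ | ∑ j, y j < t - s} ∂(μ 0)) ≤ ∫⁻ s, G s ∂(μ 0) :=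
        lintegral_mono fun s => ih (fun j => ν (Fin.succAbove 0 j))
          (fun j => hν (Fin.succAbove 0 j)) (t - s)
      have step4 : (∫⁻ s, G s ∂(μ 0)) = ∫⁻ s, exponentialPDF (ν 0) s * G s := by
        rw [hμ]
        simp only
        rw [expMeasure_eq_withDensity, lintegral_withDensity_eq_lintegral_mul _
          (measurable_exponentialPDF _) hG_meas]
        rfl
      have hintegrand_meas : Measurable (fun s => exponentialPDF lam s *
          ENNReal.ofReal (F lam n (t - s))) :=
        (measurable_exponentialPDF lam).mul
          (((measurable_F lam n).comp (measurable_const.sub measurable_id)).ennreal_ofReal)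
      have step5 : (∫⁻ s, exponentialPDF (ν 0) s * G s) ≤
          ENNReal.ofReal Lam * ENNReal.ofReal (Lam ^ n) *
            ∫⁻ s, exponentialPDF lam s * ENNReal.ofReal (F lam n (t - s)) := by
        rw [← lintegral_const_mul _ hintegrand_meas]
        apply lintegral_mono
        intro s
        simp only
        have h1 : G s = ENNReal.ofReal (Lam ^ n) * ENNReal.ofReal (F lam n (t - s)) := by
          rw [hG, ← ENNReal.ofReal_mul (by positivity : (0:ℝ) ≤ Lam ^ n)]
        rw [h1]
        calc exponentialPDF (ν 0) s * (ENNReal.ofReal (Lam ^ n) * ENNReal.ofReal (F lam n (t - s)))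
            ≤ (ENNReal.ofReal Lam * exponentialPDF lam s) *
              (ENNReal.ofReal (Lam ^ n) * ENNReal.ofReal (F lam n (t - s))) :=
              mul_le_mul_left (exponentialPDF_le hlam hLam (hν 0).1 (hν 0).2 s) _
          _ = ENNReal.ofReal Lam * ENNReal.ofReal (Lam ^ n) *
              (exponentialPDF lam s * ENNReal.ofReal (F lam n (t - s))) := by ring
      have step6 : ENNReal.ofReal Lam * ENNReal.ofReal (Lam ^ n) *
          (∫⁻ s, exponentialPDF lam s * ENNReal.ofReal (F lam n (t - s))) =
          ENNReal.ofReal (Lam ^ (n+1) * F lam (n+1) t) := by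
        rw [conv_step lam hlam n t, ← ENNReal.ofReal_mul (by linarith : (0:ℝ) ≤ Lam),
          ← ENNReal.ofReal_mul (by positivity : (0:ℝ) ≤ Lam * Lam ^ n)]
        congr 1
        rw [pow_succ]
        ring
      calc Measure.pi μ {x : Fin (n+1) → ℝ | ∑ i, x i < t}
          = ((μ 0).prod κ) {p : ℝ × (Fin n → ℝ) | p.1 + ∑ j, p.2 j < t} := step1
        _ = ∫⁻ s, κ {y : Fin n → ℝ | ∑ j, y j < t - s} ∂(μ 0) := step2
        _ ≤ ∫⁻ s, G s ∂(μ 0) := step3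
        _ = ∫⁻ s, exponentialPDF (ν 0) s * G s := step4
        _ ≤ ENNReal.ofReal Lam * ENNReal.ofReal (Lam ^ n) *
            ∫⁻ s, exponentialPDF lam s * ENNReal.ofReal (F lam n (t - s)) := step5
        _ = ENNReal.ofReal (Lam ^ (n+1) * F lam (n+1) t) := step6


end HypoExpAux

open HypoExpAux


/-- Let `m ≥ 1` and let `θ_1, …, θ_m` be independent real random variables
such that `θ_i` has the exponential distribution with rate `ν_i`, where `λ_* ≤ ν_i ≤ λ^*`
for all `i`. Then for every `t ≥ 0`,
`P(θ_1 + … + θ_m < t) ≤ Λ^m · (1/(m−1)!) ∫_0^{λ_* t} u^{m−1} e^{−u} du`,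
where `Λ = λ^*/λ_*`, i.e. the distribution function of the hypoexponential sum is bounded by
`Λ^m` times the distribution function of the Erlang distribution with shape `m` and
rate `λ_*`. -/
theorem hypoexponential_cdf_le_erlang {Ω : Type*} [MeasurableSpace Ω]
    (P : Measure Ω) [IsProbabilityMeasure P]
    (m : ℕ) (hm : 1 ≤ m)
    (lamStar lamSup : ℝ) (hStar : 0 < lamStar) (hle : lamStar ≤ lamSup)
    (ν : Fin m → ℝ) (hν : ∀ i, lamStar ≤ ν i ∧ ν i ≤ lamSup)
    (θ : Fin m → Ω → ℝ) (hmeas : ∀ i, Measurable (θ i))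
    (hindep : iIndepFun θ P)
    (hdist : ∀ i, Measure.map (θ i) P = expMeasure (ν i))
    (t : ℝ) (ht : 0 ≤ t) :
    (P {ω | (∑ i, θ i ω) < t}).toReal ≤
      (lamSup / lamStar) ^ m * ((1 / (Nat.factorial (m - 1) : ℝ)) *
        ∫ u in (0 : ℝ)..(lamStar * t), u ^ (m - 1) * Real.exp (-u)) := by
  have hpos : ∀ i, 0 < ν i := fun i => lt_of_lt_of_le hStar (hν i).1
  haveI : ∀ i, IsProbabilityMeasure (expMeasure (ν i)) := fun i =>
    isProbabilityMeasure_expMeasure (hpos i)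
  have hjm : Measurable (fun ω (i : Fin m) => θ i ω) :=
    measurable_pi_lambda _ hmeas
  have hjoint : Measure.map (fun ω (i : Fin m) => θ i ω) P =
      Measure.pi (fun i => expMeasure (ν i)) := by
    refine (Measure.pi_eq fun s hs => ?_).symm
    rw [Measure.map_apply hjm (MeasurableSet.univ_pi hs)]
    have hpre : (fun ω (i : Fin m) => θ i ω) ⁻¹' (univ.pi s) = ⋂ i, θ i ⁻¹' s i := by
      ext ω; simp [Set.mem_pi]
    rw [hpre, hindep.meas_iInter (fun i => ⟨s i, hs i, rfl⟩)]
    exact Finset.prod_congr rfl fun i _ => by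
      rw [← hdist i, Measure.map_apply (hmeas i) (hs i)]
  have hS : MeasurableSet {x : Fin m → ℝ | ∑ i, x i < t} :=
    measurableSet_lt (Finset.measurable_sum _ fun i _ => measurable_pi_apply i) measurable_const
  have hPeq : P {ω | (∑ i, θ i ω) < t} =
      Measure.pi (fun i => expMeasure (ν i)) {x | ∑ i, x i < t} := by
    rw [← hjoint, Measure.map_apply hjm hS]
    rfl
  set Lam : ℝ := lamSup / lamStar with hLamdef
  have hLam : 1 ≤ Lam := (one_le_div hStar).2 hle
  have hbounds : ∀ i, lamStar ≤ ν i ∧ ν i ≤ Lam * lamStar := by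
    intro i
    refine ⟨(hν i).1, ?_⟩
    rw [hLamdef, div_mul_cancel₀ lamSup hStar.ne']
    exact (hν i).2
  have hb := pi_bound lamStar Lam hStar hLam m ν hbounds t
  obtain ⟨n, rfl⟩ : ∃ n, m = n + 1 := ⟨m - 1, (Nat.succ_pred_eq_of_pos hm).symm⟩
  have hm1 : (n + 1) - 1 = n := rfl
  have hFeq : F lamStar (n+1) t = (1 / (Nat.factorial n : ℝ)) *
      ∫ u in (0:ℝ)..(lamStar * t), u ^ n * Real.exp (-u) := by
    rw [integral_pow_mul_exp_neg n (lamStar * t), F_if]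
    have hfacne : (Nat.factorial n : ℝ) ≠ 0 := Nat.cast_ne_zero.2 (Nat.factorial_ne_zero n)
    rcases eq_or_lt_of_le ht with h0 | h0
    · rw [if_neg (by rw [← h0]; exact lt_irrefl 0)]
      rw [← h0]
      have hsum : ∑ x ∈ Finset.range (n + 1), (0:ℝ) ^ x / (x.factorial : ℝ) = 1 := by
        rw [Finset.sum_eq_single 0]
        · simp
        · intro b _ hb
          rw [zero_pow hb]
          simp
        · simp
      simp [hsum]
    · rw [if_pos h0]
      field_simp
  rw [hm1, hPeq, ← hFeq]
  apply ENNReal.toReal_le_of_le_ofReal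
  · exact mul_nonneg (by positivity) (F_nonneg hStar.le (n+1) t)
  · exact hb
end

section
/- Fix i ∈ ℕ and an integer m ≥ 1. Then the iterated series S_{1,i,m}(h) = Σ_{j_1 ≠ i} Σ_{j_2 ≠ j_1} … Σ_{j_m ≠ j_{m−1}} ∏_{k=1}^m p_{j_{k−1} j_k}(h)/h (with j_0 = i) converges uniformly in h ∈ (0,1]: for every ε > 0 there exists n_0 such that for all h ∈ (0,1] and all n ≥ n_0, the subsum of S_{1,i,m}(h) over all tuples (j_1, …, j_m) with max_k j_k ≥ n is less than ε. -/
open Filter Set Topology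
open scoped ENNReal

/-- Extension of a tuple `j : Fin m → ℕ` to a chain `ℕ → ℕ` with value `i` at `0`
(and junk value `i` beyond `m`): `chainExt i m j k = j_{k}` for `1 ≤ k ≤ m`, `j_0 = i`. -/
def chainExt (i : ℕ) (m : ℕ) (j : Fin m → ℕ) : ℕ → ℕ :=
  fun k => if hk : 1 ≤ k ∧ k ≤ m then j ⟨k - 1, by omega⟩ else i

noncomputable def qf (p : ℕ → ℕ → ℝ → ℝ) (s : ℕ) (h : ℝ) (j : ℕ) : ℝ :=
  (if j = s then 0 else p s j h) / h

noncomputable def frf (p : ℕ → ℕ → ℝ → ℝ) (s n : ℕ) (h : ℝ) : ℝ := ∑' j, qf p s h (j + n)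

noncomputable def exprf (p : ℕ → ℕ → ℝ → ℝ) (s n : ℕ) (h : ℝ) : ℝ :=
  (1 - p s s h) / h - ∑ j ∈ Finset.range n, qf p s h j

variable {p : ℕ → ℕ → ℝ → ℝ}

lemma psummable (hrow : ∀ i, ∀ h ∈ Set.Ioc (0:ℝ) 1, ∑' j, p i j h = 1)
    (s : ℕ) {h : ℝ} (hh : h ∈ Set.Ioc (0:ℝ) 1) :
    Summable (fun j => p s j h) := by
  by_contra hns
  have := hrow s h hh
  rw [tsum_eq_zero_of_not_summable hns] at this
  norm_num at this

lemma qf_nonneg (hp01 : ∀ i j, ∀ h ∈ Set.Ioc (0:ℝ) 1, p i j h ∈ Set.Icc (0:ℝ) 1)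
    (s : ℕ) {h : ℝ} (hh : h ∈ Set.Ioc (0:ℝ) 1) (j : ℕ) : 0 ≤ qf p s h j := by
  unfold qf
  apply div_nonneg _ hh.1.le
  split
  exacts [le_refl _, (hp01 s j h hh).1]

lemma qf_summable (hp01 : ∀ i j, ∀ h ∈ Set.Ioc (0:ℝ) 1, p i j h ∈ Set.Icc (0:ℝ) 1)
    (hrow : ∀ i, ∀ h ∈ Set.Ioc (0:ℝ) 1, ∑' j, p i j h = 1)
    (s : ℕ) {h : ℝ} (hh : h ∈ Set.Ioc (0:ℝ) 1) : Summable (qf p s h) := by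
  apply Summable.div_const
  apply Summable.of_nonneg_of_le _ _ (psummable hrow s hh)
  · intro j; split
    exacts [le_refl _, (hp01 s j h hh).1]
  · intro j; split
    exacts [(hp01 s j h hh).1, le_refl _]

lemma qf_tsum (hp01 : ∀ i j, ∀ h ∈ Set.Ioc (0:ℝ) 1, p i j h ∈ Set.Icc (0:ℝ) 1)
    (hrow : ∀ i, ∀ h ∈ Set.Ioc (0:ℝ) 1, ∑' j, p i j h = 1)
    (s : ℕ) {h : ℝ} (hh : h ∈ Set.Ioc (0:ℝ) 1) :
    ∑' j, qf p s h j = (1 - p s s h) / h := by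
  have h1 := (psummable hrow s hh).tsum_eq_add_tsum_ite s
  rw [hrow s h hh] at h1
  unfold qf
  rw [tsum_div_const]
  rw [show (∑' j, if j = s then 0 else p s j h) = 1 - p s s h by linarith]

lemma fr_eq (hp01 : ∀ i j, ∀ h ∈ Set.Ioc (0:ℝ) 1, p i j h ∈ Set.Icc (0:ℝ) 1)
    (hrow : ∀ i, ∀ h ∈ Set.Ioc (0:ℝ) 1, ∑' j, p i j h = 1)
    (s n : ℕ) {h : ℝ} (hh : h ∈ Set.Ioc (0:ℝ) 1) :
    frf p s n h = exprf p s n h := by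
  have h1 := (qf_summable hp01 hrow s hh).sum_add_tsum_nat_add n
  rw [qf_tsum hp01 hrow s hh] at h1
  unfold frf exprf
  linarith

lemma fr_nonneg (hp01 : ∀ i j, ∀ h ∈ Set.Ioc (0:ℝ) 1, p i j h ∈ Set.Icc (0:ℝ) 1)
    (s n : ℕ) {h : ℝ} (hh : h ∈ Set.Ioc (0:ℝ) 1) : 0 ≤ frf p s n h :=
  tsum_nonneg fun j => qf_nonneg hp01 s hh (j + n)

lemma fr_antitone (hp01 : ∀ i j, ∀ h ∈ Set.Ioc (0:ℝ) 1, p i j h ∈ Set.Icc (0:ℝ) 1)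
    (hrow : ∀ i, ∀ h ∈ Set.Ioc (0:ℝ) 1, ∑' j, p i j h = 1)
    (s : ℕ) {n n' : ℕ} (hnn : n ≤ n') {h : ℝ} (hh : h ∈ Set.Ioc (0:ℝ) 1) :
    frf p s n' h ≤ frf p s n h := by
  rw [fr_eq hp01 hrow s n hh, fr_eq hp01 hrow s n' hh]
  unfold exprf
  have := Finset.sum_le_sum_of_subset_of_nonneg (Finset.range_subset_range.2 hnn)
    (fun j _ _ => qf_nonneg hp01 s hh j)
  linarith

lemma fr_tendsto (s : ℕ) {h : ℝ} :
    Tendsto (fun n => frf p s n h) atTop (𝓝 0) := tendsto_sum_nat_add (qf p s h)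

lemma lemA (lam : ℕ → ℕ → ℝ) (lamTot : ℕ → ℝ) (lamStar : ℝ)
    (hlamTot : ∀ i, lamTot i = ∑' j, if j = i then 0 else lam i j)
    (hStar : 0 < lamStar) (hStarLe : ∀ i, lamStar ≤ lamTot i)
    (hp01 : ∀ i j, ∀ h ∈ Set.Ioc (0:ℝ) 1, p i j h ∈ Set.Icc (0:ℝ) 1)
    (hrow : ∀ i, ∀ h ∈ Set.Ioc (0:ℝ) 1, ∑' j, p i j h = 1)
    (hcont : ∀ i j, ContinuousOn (fun h => p i j h) (Set.Ioc (0:ℝ) 1))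
    (hlim : ∀ i j, i ≠ j →
      Tendsto (fun h => p i j h / h) (nhdsWithin 0 (Set.Ioi 0)) (nhds (lam i j)))
    (hdiag : ∀ i,
      Tendsto (fun h => (1 - p i i h) / h) (nhdsWithin 0 (Set.Ioi 0)) (nhds (lamTot i)))
    (s : ℕ) :
    ∀ ε > 0, ∃ n₀ : ℕ, ∀ h ∈ Set.Ioc (0:ℝ) 1, ∀ n ≥ n₀, frf p s n h ≤ ε := by
  intro ε hε
  -- summability of the lambda row
  have lamq_summable : Summable (fun j => if j = s then 0 else lam s j) := by
    by_contra hns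
    have h1 := hlamTot s
    rw [tsum_eq_zero_of_not_summable hns] at h1
    have := hStarLe s
    rw [h1] at this
    linarith
  have key : ∀ x : ℝ, ∃ (nx : ℕ) (U : Set ℝ), IsOpen U ∧ x ∈ U ∧
      ∀ h ∈ U ∩ Set.Ioc (0:ℝ) 1, frf p s nx h ≤ ε := by
    intro x
    by_cases hx : x ∈ Set.Icc (0:ℝ) 1
    · by_cases hx0 : x = 0
      · -- limit argument at 0
        subst hx0
        obtain ⟨n, hn⟩ : ∃ n, lamTot s - ε / 2 <
            ∑ j ∈ Finset.range n, (if j = s then 0 else lam s j) := by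
          have ht := lamq_summable.hasSum.tendsto_sum_nat
          rw [← hlamTot s] at ht
          exact (ht.eventually (eventually_gt_nhds (by linarith))).exists
        have hlim2 : Tendsto (fun h => exprf p s n h) (𝓝[>] (0:ℝ))
            (𝓝 (lamTot s - ∑ j ∈ Finset.range n, (if j = s then 0 else lam s j))) := by
          apply Tendsto.sub (hdiag s)
          apply tendsto_finset_sum
          intro j _
          by_cases hj : j = s
          · simp only [qf, if_pos hj, zero_div]
            exact tendsto_const_nhds
          · simp only [qf, if_neg hj]
            exact hlim s j (fun hsj => hj hsj.symm)
        have hev : ∀ᶠ h in 𝓝[>] (0:ℝ), exprf p s n h < ε :=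
          hlim2.eventually (eventually_lt_nhds (by linarith))
        have hE : {h : ℝ | h ∈ Set.Ioc (0:ℝ) 1 → frf p s n h ≤ ε} ∈ 𝓝[>] (0:ℝ) := by
          filter_upwards [hev] with h hh hIoc
          rw [fr_eq hp01 hrow s n hIoc]
          exact hh.le
        obtain ⟨U, hUo, hU0, hUsub⟩ := mem_nhdsWithin.1 hE
        exact ⟨n, U, hUo, hU0, fun h hh => hUsub ⟨hh.1, hh.2.1⟩ hh.2⟩
      · -- continuity argument at x ∈ Ioc 0 1
        have hxI : x ∈ Set.Ioc (0:ℝ) 1 := ⟨lt_of_le_of_ne hx.1 (Ne.symm hx0), hx.2⟩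
        obtain ⟨n, hn⟩ : ∃ n, frf p s n x < ε :=
          ((fr_tendsto s).eventually (eventually_lt_nhds hε)).exists
        have hcont' : ContinuousOn (exprf p s n) (Set.Ioc (0:ℝ) 1) := by
          apply ContinuousOn.sub
          · exact (continuousOn_const.sub (hcont s s)).div continuousOn_id
              (fun h hh => ne_of_gt hh.1)
          · apply continuousOn_finset_sum
            intro j _
            by_cases hj : j = s
            · simp only [qf, if_pos hj, zero_div]
              exact continuousOn_const
            · simp only [qf, if_neg hj]
              exact (hcont s j).div continuousOn_id (fun h hh => ne_of_gt hh.1)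
        have hn' : exprf p s n x < ε := by
          rw [← fr_eq hp01 hrow s n hxI]; exact hn
        have hev : ∀ᶠ h in 𝓝[Set.Ioc (0:ℝ) 1] x, exprf p s n h < ε :=
          Filter.Tendsto.eventually (hcont' x hxI) (eventually_lt_nhds hn')
        have hE : {h : ℝ | h ∈ Set.Ioc (0:ℝ) 1 → frf p s n h ≤ ε} ∈
            𝓝[Set.Ioc (0:ℝ) 1] x := by
          filter_upwards [hev] with h hh hIoc
          rw [fr_eq hp01 hrow s n hIoc]
          exact hh.le
        obtain ⟨U, hUo, hU0, hUsub⟩ := mem_nhdsWithin.1 hE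
        exact ⟨n, U, hUo, hU0, fun h hh => hUsub ⟨hh.1, hh.2⟩ hh.2⟩
    · exact ⟨0, (Set.Icc (0:ℝ) 1)ᶜ, isClosed_Icc.isOpen_compl, hx,
        fun h hh => absurd (Set.Ioc_subset_Icc_self hh.2) hh.1⟩
  choose nx U hUopen hUmem hUsmall using key
  obtain ⟨t, -, hcov⟩ := (isCompact_Icc : IsCompact (Set.Icc (0:ℝ) 1)).elim_nhds_subcover U
    (fun x _ => (hUopen x).mem_nhds (hUmem x))
  refine ⟨t.sup nx, fun h hh n hn => ?_⟩
  obtain ⟨x, hxt, hhU⟩ := Set.mem_iUnion₂.1 (hcov (Set.Ioc_subset_Icc_self hh))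
  exact (fr_antitone hp01 hrow s (le_trans (Finset.le_sup hxt) hn) hh).trans
    (hUsmall x h ⟨hhU, hh⟩)


noncomputable def Qe (p : ℕ → ℕ → ℝ → ℝ) (h : ℝ) (s j : ℕ) : ℝ≥0∞ :=
  ENNReal.ofReal (qf p s h j)

-- tail reindex in ENNReal
lemma tail_reindex (g : ℕ → ℝ≥0∞) (n : ℕ) :
    ∑' j, (if n ≤ j then g j else 0) = ∑' j, g (j + n) := by
  rw [← Function.Injective.tsum_eq (g := fun j => j + n)
    (add_left_injective n) (f := fun j => if n ≤ j then g j else 0)]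
  · apply tsum_congr
    intro j
    rw [if_pos (Nat.le_add_left n j)]
  · intro j hj
    rw [Function.mem_support] at hj
    have hn : n ≤ j := by by_contra hc; rw [if_neg hc] at hj; exact hj rfl
    exact ⟨j - n, Nat.sub_add_cancel hn⟩

-- split a tsum over ℕ at N
lemma split_at (g : ℕ → ℝ≥0∞) (N : ℕ) :
    ∑' s, g s = (∑' s, if s < N then g s else 0) + ∑' s, (if N ≤ s then g s else 0) := by
  rw [← ENNReal.tsum_add]
  apply tsum_congr
  intro s
  by_cases hs : s < N
  · rw [if_pos hs, if_neg (by omega), add_zero]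
  · rw [if_neg hs, if_pos (by omega), zero_add]


noncomputable def prodQ (p : ℕ → ℕ → ℝ → ℝ) (h : ℝ) (s m : ℕ) (j : Fin m → ℕ) : ℝ≥0∞ :=
  ∏ k ∈ Finset.range m, Qe p h (chainExt s m j k) (chainExt s m j (k + 1))

noncomputable def AQit (p : ℕ → ℕ → ℝ → ℝ) (h : ℝ) (w : ℕ → ℝ≥0∞) : ℕ → ℕ → ℝ≥0∞
  | 0 => w
  | (k+1) => fun t => ∑' s, AQit p h w k s * Qe p h s t

lemma AQit_one (p : ℕ → ℕ → ℝ → ℝ) (h : ℝ) (w : ℕ → ℝ≥0∞) (k : ℕ) :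
    AQit p h (AQit p h w 1) k = AQit p h w (k + 1) := by
  induction k with
  | zero => rfl
  | succ k ih => funext t; show ∑' s, AQit p h (AQit p h w 1) k s * _ = _; rw [ih]; rfl

-- chainExt of cons
lemma chainExt_cons (s a : ℕ) (m : ℕ) (j : Fin m → ℕ) (k : ℕ) (hk : k ≤ m) :
    chainExt s (m + 1) (Fin.cons a j) (k + 1) = chainExt a m j k := by
  unfold chainExt
  by_cases h1 : 1 ≤ k ∧ k ≤ m
  · rw [dif_pos (by omega), dif_pos h1]
    have : (⟨k + 1 - 1, by omega⟩ : Fin (m+1)) = Fin.succ ⟨k - 1, by omega⟩ := by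
      apply Fin.ext; simp; omega
    rw [this, Fin.cons_succ]
  · have hk0 : k = 0 := by omega
    subst hk0
    rw [dif_pos (by omega), dif_neg (by omega)]
    exact Fin.cons_zero (α := fun _ : Fin (m+1) => ℕ) a j

lemma prodQ_cons (p : ℕ → ℕ → ℝ → ℝ) (h : ℝ) (s a m : ℕ) (j : Fin m → ℕ) :
    prodQ p h s (m + 1) (Fin.cons a j) = Qe p h s a * prodQ p h a m j := by
  unfold prodQ
  rw [Finset.prod_range_succ', mul_comm]
  have h0 : chainExt s (m+1) (Fin.cons a j) 0 = s := by
    unfold chainExt; rw [dif_neg (by omega)]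
  have h1 : chainExt s (m+1) (Fin.cons a j) (0+1) = a := by
    rw [chainExt_cons s a m j 0 (Nat.zero_le m)]
    unfold chainExt; rw [dif_neg (by omega)]
  rw [h0, h1]
  congr 1
  apply Finset.prod_congr rfl
  intro k hk
  rw [Finset.mem_range] at hk
  rw [chainExt_cons s a m j k (by omega), chainExt_cons s a m j (k+1) (by omega)]

lemma tsum_fin_succ {m : ℕ} (F : (Fin (m+1) → ℕ) → ℝ≥0∞) :
    ∑' j, F j = ∑' a : ℕ, ∑' j : Fin m → ℕ, F (Fin.cons a j) := by
  rw [← (Fin.consEquiv (fun _ : Fin (m+1) => ℕ)).tsum_eq F]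
  rw [← ENNReal.tsum_prod]
  rfl

lemma tsum_fin_zero (F : (Fin 0 → ℕ) → ℝ≥0∞) :
    ∑' j, F j = F default :=
  tsum_eq_single default (fun b hb => absurd (Subsingleton.elim b default) hb)

noncomputable def Ee (p : ℕ → ℕ → ℝ → ℝ) (h : ℝ) (m s : ℕ) : ℝ≥0∞ :=
  ∑' j : Fin m → ℕ, prodQ p h s m j

noncomputable def Te (p : ℕ → ℕ → ℝ → ℝ) (h : ℝ) (s m n : ℕ) : ℝ≥0∞ :=
  ∑' j : Fin m → ℕ, (if ∃ k, n ≤ j k then prodQ p h s m j else 0)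

lemma exists_cons {m n : ℕ} (a : ℕ) (j : Fin m → ℕ) :
    (∃ k : Fin (m+1), n ≤ Fin.cons (α := fun _ => ℕ) a j k) ↔ n ≤ a ∨ ∃ k : Fin m, n ≤ j k := by
  constructor
  · rintro ⟨k, hk⟩
    rcases Fin.eq_zero_or_eq_succ k with h0 | ⟨k', rfl⟩
    · left; rwa [h0, Fin.cons_zero] at hk
    · right; exact ⟨k', by rwa [Fin.cons_succ] at hk⟩
  · rintro (ha | ⟨k, hk⟩)
    · exact ⟨0, by rwa [Fin.cons_zero]⟩
    · exact ⟨k.succ, by rwa [Fin.cons_succ]⟩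


variable {p : ℕ → ℕ → ℝ → ℝ}

lemma Qe_eq_ofReal_tsum
    (hp01 : ∀ i j, ∀ h ∈ Set.Ioc (0:ℝ) 1, p i j h ∈ Set.Icc (0:ℝ) 1)
    (hrow : ∀ i, ∀ h ∈ Set.Ioc (0:ℝ) 1, ∑' j, p i j h = 1)
    (s : ℕ) {h : ℝ} (hh : h ∈ Set.Ioc (0:ℝ) 1) :
    ∑' j, Qe p h s j = ENNReal.ofReal ((1 - p s s h) / h) := by
  unfold Qe
  rw [← ENNReal.ofReal_tsum_of_nonneg (qf_nonneg hp01 s hh) (qf_summable hp01 hrow s hh)]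
  rw [qf_tsum hp01 hrow s hh]

lemma Qe_row (lamSup : ℝ)
    (hp01 : ∀ i j, ∀ h ∈ Set.Ioc (0:ℝ) 1, p i j h ∈ Set.Icc (0:ℝ) 1)
    (hrow : ∀ i, ∀ h ∈ Set.Ioc (0:ℝ) 1, ∑' j, p i j h = 1)
    (hdiag_bd : ∀ i, ∀ h ∈ Set.Ioc (0:ℝ) 1, (1 - p i i h) / h ≤ 2 * lamSup)
    (s : ℕ) {h : ℝ} (hh : h ∈ Set.Ioc (0:ℝ) 1) :
    ∑' j, Qe p h s j ≤ ENNReal.ofReal (2 * lamSup) := by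
  rw [Qe_eq_ofReal_tsum hp01 hrow s hh]
  exact ENNReal.ofReal_le_ofReal (hdiag_bd s h hh)

lemma Qe_tail_le (lamSup : ℝ)
    (hp01 : ∀ i j, ∀ h ∈ Set.Ioc (0:ℝ) 1, p i j h ∈ Set.Icc (0:ℝ) 1)
    (hrow : ∀ i, ∀ h ∈ Set.Ioc (0:ℝ) 1, ∑' j, p i j h = 1)
    (hdiag_bd : ∀ i, ∀ h ∈ Set.Ioc (0:ℝ) 1, (1 - p i i h) / h ≤ 2 * lamSup)
    (s n : ℕ) {h : ℝ} (hh : h ∈ Set.Ioc (0:ℝ) 1) :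
    ∑' t, (if n ≤ t then Qe p h s t else 0) ≤ ENNReal.ofReal (2 * lamSup) := by
  refine le_trans (ENNReal.tsum_le_tsum fun t => ?_) (Qe_row lamSup hp01 hrow hdiag_bd s hh)
  split
  · exact le_refl _
  · exact zero_le

lemma QtailE (lam : ℕ → ℕ → ℝ) (lamTot : ℕ → ℝ) (lamStar : ℝ)
    (hlamTot : ∀ i, lamTot i = ∑' j, if j = i then 0 else lam i j)
    (hStar : 0 < lamStar) (hStarLe : ∀ i, lamStar ≤ lamTot i)
    (hp01 : ∀ i j, ∀ h ∈ Set.Ioc (0:ℝ) 1, p i j h ∈ Set.Icc (0:ℝ) 1)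
    (hrow : ∀ i, ∀ h ∈ Set.Ioc (0:ℝ) 1, ∑' j, p i j h = 1)
    (hcont : ∀ i j, ContinuousOn (fun h => p i j h) (Set.Ioc (0:ℝ) 1))
    (hlim : ∀ i j, i ≠ j →
      Tendsto (fun h => p i j h / h) (nhdsWithin 0 (Set.Ioi 0)) (nhds (lam i j)))
    (hdiag : ∀ i,
      Tendsto (fun h => (1 - p i i h) / h) (nhdsWithin 0 (Set.Ioi 0)) (nhds (lamTot i)))
    (s : ℕ) :
    ∀ ε > 0, ∃ n₀ : ℕ, ∀ h ∈ Set.Ioc (0:ℝ) 1, ∀ n ≥ n₀,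
      ∑' t, (if n ≤ t then Qe p h s t else 0) ≤ ENNReal.ofReal ε := by
  intro ε hε
  obtain ⟨n₀, hn₀⟩ := lemA lam lamTot lamStar hlamTot hStar hStarLe hp01 hrow hcont hlim hdiag s ε hε
  refine ⟨n₀, fun h hh n hn => ?_⟩
  rw [tail_reindex]
  have hsum : Summable (fun j => qf p s h (j + n)) :=
    (summable_nat_add_iff n).2 (qf_summable hp01 hrow s hh)
  unfold Qe
  rw [← ENNReal.ofReal_tsum_of_nonneg (fun j => qf_nonneg hp01 s hh (j + n)) hsum]
  exact ENNReal.ofReal_le_ofReal (hn₀ h hh n hn)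

lemma Ee_le (lamSup : ℝ)
    (hp01 : ∀ i j, ∀ h ∈ Set.Ioc (0:ℝ) 1, p i j h ∈ Set.Icc (0:ℝ) 1)
    (hrow : ∀ i, ∀ h ∈ Set.Ioc (0:ℝ) 1, ∑' j, p i j h = 1)
    (hdiag_bd : ∀ i, ∀ h ∈ Set.Ioc (0:ℝ) 1, (1 - p i i h) / h ≤ 2 * lamSup)
    (m : ℕ) : ∀ (s : ℕ), ∀ {h : ℝ}, h ∈ Set.Ioc (0:ℝ) 1 →
      Ee p h m s ≤ ENNReal.ofReal (2 * lamSup) ^ m := by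
  induction m with
  | zero =>
    intro s h hh
    unfold Ee
    rw [tsum_fin_zero, pow_zero]
    unfold prodQ
    simp
  | succ m ih =>
    intro s h hh
    unfold Ee
    rw [tsum_fin_succ]
    have h1 : ∀ a : ℕ, ∑' j : Fin m → ℕ, prodQ p h s (m+1) (Fin.cons a j)
        = Qe p h s a * Ee p h m a := by
      intro a
      unfold Ee
      rw [← ENNReal.tsum_mul_left]
      exact tsum_congr fun j => prodQ_cons p h s a m j
    calc ∑' a, ∑' j : Fin m → ℕ, prodQ p h s (m+1) (Fin.cons a j)
        = ∑' a, Qe p h s a * Ee p h m a := tsum_congr h1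
      _ ≤ ∑' a, Qe p h s a * ENNReal.ofReal (2 * lamSup) ^ m :=
          ENNReal.tsum_le_tsum fun a => mul_le_mul_right (ih a hh) _
      _ = (∑' a, Qe p h s a) * ENNReal.ofReal (2 * lamSup) ^ m := ENNReal.tsum_mul_right
      _ ≤ ENNReal.ofReal (2 * lamSup) * ENNReal.ofReal (2 * lamSup) ^ m :=
          mul_le_mul_left (Qe_row lamSup hp01 hrow hdiag_bd s hh) _
      _ = ENNReal.ofReal (2 * lamSup) ^ (m + 1) := by rw [pow_succ, mul_comm]

lemma AQit_mass (lamSup : ℝ)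
    (hp01 : ∀ i j, ∀ h ∈ Set.Ioc (0:ℝ) 1, p i j h ∈ Set.Icc (0:ℝ) 1)
    (hrow : ∀ i, ∀ h ∈ Set.Ioc (0:ℝ) 1, ∑' j, p i j h = 1)
    (hdiag_bd : ∀ i, ∀ h ∈ Set.Ioc (0:ℝ) 1, (1 - p i i h) / h ≤ 2 * lamSup)
    (w : ℕ → ℝ≥0∞) {h : ℝ} (hh : h ∈ Set.Ioc (0:ℝ) 1) (k : ℕ) :
    ∑' t, AQit p h w k t ≤ (∑' t, w t) * ENNReal.ofReal (2 * lamSup) ^ k := by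
  induction k with
  | zero => rw [pow_zero, mul_one]; exact le_refl _
  | succ k ih =>
    show ∑' t, ∑' s, AQit p h w k s * Qe p h s t ≤ _
    rw [ENNReal.tsum_comm]
    calc ∑' s, ∑' t, AQit p h w k s * Qe p h s t
        = ∑' s, AQit p h w k s * ∑' t, Qe p h s t :=
          tsum_congr fun s => ENNReal.tsum_mul_left
      _ ≤ ∑' s, AQit p h w k s * ENNReal.ofReal (2 * lamSup) :=
          ENNReal.tsum_le_tsum fun s =>
            mul_le_mul_right (Qe_row lamSup hp01 hrow hdiag_bd s hh) _
      _ = (∑' s, AQit p h w k s) * ENNReal.ofReal (2 * lamSup) := ENNReal.tsum_mul_right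
      _ ≤ ((∑' t, w t) * ENNReal.ofReal (2 * lamSup) ^ k) * ENNReal.ofReal (2 * lamSup) :=
          mul_le_mul_left ih _
      _ = (∑' t, w t) * ENNReal.ofReal (2 * lamSup) ^ (k + 1) := by
          rw [mul_assoc, pow_succ]

lemma lemG (lamSup : ℝ)
    (hp01 : ∀ i j, ∀ h ∈ Set.Ioc (0:ℝ) 1, p i j h ∈ Set.Icc (0:ℝ) 1)
    (hrow : ∀ i, ∀ h ∈ Set.Ioc (0:ℝ) 1, ∑' j, p i j h = 1)
    (hdiag_bd : ∀ i, ∀ h ∈ Set.Ioc (0:ℝ) 1, (1 - p i i h) / h ≤ 2 * lamSup)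
    (m : ℕ) : ∀ (w : ℕ → ℝ≥0∞) (n : ℕ) {h : ℝ}, h ∈ Set.Ioc (0:ℝ) 1 →
    ∑' s, w s * Te p h s m n ≤
      ∑ r ∈ Finset.range m, (∑' t, if n ≤ t then AQit p h w (r+1) t else 0)
        * ENNReal.ofReal (2 * lamSup) ^ (m - 1 - r) := by
  induction m with
  | zero =>
    intro w n h hh
    have : ∀ s, Te p h s 0 n = 0 := by
      intro s
      unfold Te
      rw [tsum_fin_zero]
      rw [if_neg (by rintro ⟨⟨k, hk⟩, -⟩; omega)]
    simp [this]
  | succ m ih =>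
    intro w n h hh
    set C := ENNReal.ofReal (2 * lamSup) with hC
    have step1 : ∀ s, Te p h s (m+1) n ≤
        (∑' a, if n ≤ a then Qe p h s a * Ee p h m a else 0)
          + ∑' a, Qe p h s a * Te p h a m n := by
      intro s
      unfold Te
      rw [tsum_fin_succ]
      have hb : ∀ (a : ℕ) (j : Fin m → ℕ),
          (if ∃ k, n ≤ Fin.cons (α := fun _ => ℕ) a j k
            then prodQ p h s (m+1) (Fin.cons a j) else 0)
          ≤ (if n ≤ a then Qe p h s a * prodQ p h a m j else 0)
            + (if ∃ k, n ≤ j k then Qe p h s a * prodQ p h a m j else 0) := by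
        intro a j
        by_cases hc : ∃ k, n ≤ Fin.cons (α := fun _ => ℕ) a j k
        · rw [if_pos hc, prodQ_cons]
          rcases (exists_cons a j).1 hc with hna | hj
          · exact le_add_of_le_of_nonneg (by rw [if_pos hna]) (zero_le)
          · exact le_add_of_nonneg_of_le (zero_le) (by rw [if_pos hj])
        · rw [if_neg hc]; exact zero_le
      calc ∑' a, ∑' j : Fin m → ℕ, (if ∃ k, n ≤ Fin.cons (α := fun _ => ℕ) a j k
            then prodQ p h s (m+1) (Fin.cons a j) else 0)
          ≤ ∑' a, ∑' j : Fin m → ℕ,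
            ((if n ≤ a then Qe p h s a * prodQ p h a m j else 0)
              + (if ∃ k, n ≤ j k then Qe p h s a * prodQ p h a m j else 0)) :=
            ENNReal.tsum_le_tsum fun a => ENNReal.tsum_le_tsum fun j => hb a j
        _ = ∑' a, ((∑' j : Fin m → ℕ, (if n ≤ a then Qe p h s a * prodQ p h a m j else 0))
              + ∑' j : Fin m → ℕ, (if ∃ k, n ≤ j k then Qe p h s a * prodQ p h a m j else 0)) :=
            tsum_congr fun a => ENNReal.tsum_add
        _ = ∑' a, ((if n ≤ a then Qe p h s a * Ee p h m a else 0)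
              + Qe p h s a * Te p h a m n) := by
            apply tsum_congr
            intro a
            congr 1
            · by_cases hna : n ≤ a
              · simp only [if_pos hna]
                rw [ENNReal.tsum_mul_left]
                rfl
              · simp only [if_neg hna, tsum_zero]
            · unfold Te
              rw [← ENNReal.tsum_mul_left]
              apply tsum_congr
              intro j
              by_cases hj : ∃ k, n ≤ j k
              · rw [if_pos hj, if_pos hj]
              · rw [if_neg hj, if_neg hj, mul_zero]
        _ = _ := ENNReal.tsum_add
    have main : ∑' s, w s * Te p h s (m+1) n ≤
        (∑' s, w s * ∑' a, (if n ≤ a then Qe p h s a * Ee p h m a else 0))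
          + ∑' s, w s * ∑' a, Qe p h s a * Te p h a m n := by
      calc ∑' s, w s * Te p h s (m+1) n
          ≤ ∑' s, w s * ((∑' a, if n ≤ a then Qe p h s a * Ee p h m a else 0)
              + ∑' a, Qe p h s a * Te p h a m n) :=
            ENNReal.tsum_le_tsum fun s => mul_le_mul_right (step1 s) _
        _ = ∑' s, (w s * (∑' a, if n ≤ a then Qe p h s a * Ee p h m a else 0)
              + w s * ∑' a, Qe p h s a * Te p h a m n) :=
            tsum_congr fun s => mul_add _ _ _
        _ = _ := ENNReal.tsum_add
    have term1 : ∑' s, w s * ∑' a, (if n ≤ a then Qe p h s a * Ee p h m a else 0)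
        ≤ (∑' t, if n ≤ t then AQit p h w 1 t else 0) * C ^ m := by
      calc ∑' s, w s * ∑' a, (if n ≤ a then Qe p h s a * Ee p h m a else 0)
          = ∑' s, ∑' a, w s * (if n ≤ a then Qe p h s a * Ee p h m a else 0) :=
            tsum_congr fun s => ENNReal.tsum_mul_left.symm
        _ = ∑' a, ∑' s, w s * (if n ≤ a then Qe p h s a * Ee p h m a else 0) :=
            ENNReal.tsum_comm
        _ = ∑' a, (if n ≤ a then (∑' s, w s * Qe p h s a) * Ee p h m a else 0) := by
            apply tsum_congr
            intro a
            by_cases hna : n ≤ a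
            · simp only [if_pos hna]
              rw [← ENNReal.tsum_mul_right]
              exact tsum_congr fun s => (mul_assoc _ _ _).symm
            · simp only [if_neg hna, mul_zero, tsum_zero]
        _ ≤ ∑' a, (if n ≤ a then ∑' s, w s * Qe p h s a else 0) * C ^ m := by
            apply ENNReal.tsum_le_tsum
            intro a
            by_cases hna : n ≤ a
            · simp only [if_pos hna]
              exact mul_le_mul_right (Ee_le lamSup hp01 hrow hdiag_bd m a hh) _
            · simp only [if_neg hna, zero_mul, le_refl]
        _ = (∑' t, if n ≤ t then AQit p h w 1 t else 0) * C ^ m := by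
            rw [ENNReal.tsum_mul_right]
            rfl
    have term2 : ∑' s, w s * ∑' a, Qe p h s a * Te p h a m n
        ≤ ∑ r ∈ Finset.range m, (∑' t, if n ≤ t then AQit p h w (r+2) t else 0)
            * C ^ (m - 1 - r) := by
      have heq : ∑' s, w s * ∑' a, Qe p h s a * Te p h a m n
          = ∑' a, AQit p h w 1 a * Te p h a m n := by
        calc ∑' s, w s * ∑' a, Qe p h s a * Te p h a m n
            = ∑' s, ∑' a, w s * (Qe p h s a * Te p h a m n) :=
              tsum_congr fun s => ENNReal.tsum_mul_left.symm
          _ = ∑' a, ∑' s, w s * (Qe p h s a * Te p h a m n) := ENNReal.tsum_comm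
          _ = ∑' a, AQit p h w 1 a * Te p h a m n := by
              apply tsum_congr
              intro a
              show _ = (∑' s, w s * Qe p h s a) * Te p h a m n
              rw [← ENNReal.tsum_mul_right]
              exact tsum_congr fun s => (mul_assoc _ _ _).symm
      rw [heq]
      refine le_trans (ih (AQit p h w 1) n hh) ?_
      apply le_of_eq
      apply Finset.sum_congr rfl
      intro r _
      rw [AQit_one]
    refine le_trans main ?_
    rw [Finset.sum_range_succ']
    have hexp : ∀ r, m + 1 - 1 - (r + 1) = m - 1 - r := by intro r; omega
    have hexp0 : m + 1 - 1 - 0 = m := by omega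
    rw [hexp0]
    refine le_trans (add_le_add term1 term2) ?_
    rw [add_comm]
    apply add_le_add
    · apply le_of_eq
      apply Finset.sum_congr rfl
      intro r _
      rw [hexp r]
    · exact le_refl _

lemma delta_mass (i : ℕ) : ∑' t : ℕ, (if t = i then (1:ℝ≥0∞) else 0) = 1 :=
  tsum_ite_eq i 1

lemma Vtail (lam : ℕ → ℕ → ℝ) (lamTot : ℕ → ℝ) (lamStar lamSup : ℝ)
    (hlamTot : ∀ i, lamTot i = ∑' j, if j = i then 0 else lam i j)
    (hStar : 0 < lamStar) (hStarLe : ∀ i, lamStar ≤ lamTot i)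
    (hlamSup : 0 < lamSup)
    (hp01 : ∀ i j, ∀ h ∈ Set.Ioc (0:ℝ) 1, p i j h ∈ Set.Icc (0:ℝ) 1)
    (hrow : ∀ i, ∀ h ∈ Set.Ioc (0:ℝ) 1, ∑' j, p i j h = 1)
    (hcont : ∀ i j, ContinuousOn (fun h => p i j h) (Set.Ioc (0:ℝ) 1))
    (hlim : ∀ i j, i ≠ j →
      Tendsto (fun h => p i j h / h) (nhdsWithin 0 (Set.Ioi 0)) (nhds (lam i j)))
    (hdiag : ∀ i,
      Tendsto (fun h => (1 - p i i h) / h) (nhdsWithin 0 (Set.Ioi 0)) (nhds (lamTot i)))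
    (hdiag_bd : ∀ i, ∀ h ∈ Set.Ioc (0:ℝ) 1, (1 - p i i h) / h ≤ 2 * lamSup)
    (i : ℕ) :
    ∀ (k : ℕ), ∀ ε > 0, ∃ n₀ : ℕ, ∀ h ∈ Set.Ioc (0:ℝ) 1, ∀ n ≥ n₀,
      ∑' t, (if n ≤ t then AQit p h (fun s => if s = i then 1 else 0) k t else 0)
        ≤ ENNReal.ofReal ε := by
  intro k
  induction k with
  | zero =>
    intro ε hε
    refine ⟨i + 1, fun h hh n hn => ?_⟩
    have hz : ∀ t, (if n ≤ t then AQit p h (fun s => if s = i then 1 else 0) 0 t else 0)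
        = 0 := by
      intro t
      show (if n ≤ t then (if t = i then (1:ℝ≥0∞) else 0) else 0) = 0
      by_cases h1 : n ≤ t
      · rw [if_pos h1, if_neg (fun h2 => by omega)]
      · rw [if_neg h1]
    rw [tsum_congr hz, tsum_zero]
    exact zero_le
  | succ k ih =>
    intro ε hε
    have h2ls : (0:ℝ) < 2 * lamSup := by linarith
    have hpow : (0:ℝ) < (2 * lamSup) ^ k := pow_pos h2ls k
    have hε1 : (0:ℝ) < ε / (2 * (2 * lamSup)) := by positivity
    have hε2 : (0:ℝ) < ε / (2 * (2 * lamSup) ^ k) := by positivity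
    obtain ⟨N, hN⟩ := ih (ε / (2 * (2 * lamSup))) hε1
    have hQ : ∀ s : ℕ, ∃ n₀ : ℕ, ∀ h ∈ Set.Ioc (0:ℝ) 1, ∀ n ≥ n₀,
        ∑' t, (if n ≤ t then Qe p h s t else 0)
          ≤ ENNReal.ofReal (ε / (2 * (2 * lamSup) ^ k)) :=
      fun s => QtailE lam lamTot lamStar hlamTot hStar hStarLe hp01 hrow hcont hlim hdiag s
        _ hε2
    choose f hf using hQ
    refine ⟨Finset.sup (Finset.range N) f, fun h hh n hn => ?_⟩
    set δ : ℕ → ℝ≥0∞ := fun s => if s = i then 1 else 0 with hδ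
    have swap : ∑' t, (if n ≤ t then AQit p h δ (k+1) t else 0)
        = ∑' s, AQit p h δ k s * ∑' t, (if n ≤ t then Qe p h s t else 0) := by
      calc ∑' t, (if n ≤ t then AQit p h δ (k+1) t else 0)
          = ∑' t, ∑' s, (if n ≤ t then AQit p h δ k s * Qe p h s t else 0) := by
            apply tsum_congr
            intro t
            by_cases h1 : n ≤ t
            · simp only [if_pos h1]; rfl
            · simp only [if_neg h1, tsum_zero]
        _ = ∑' s, ∑' t, (if n ≤ t then AQit p h δ k s * Qe p h s t else 0) :=
            ENNReal.tsum_comm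
        _ = ∑' s, AQit p h δ k s * ∑' t, (if n ≤ t then Qe p h s t else 0) := by
            apply tsum_congr
            intro s
            rw [← ENNReal.tsum_mul_left]
            apply tsum_congr
            intro t
            by_cases h1 : n ≤ t
            · simp only [if_pos h1]
            · simp only [if_neg h1, mul_zero]
    rw [swap]
    have mass : ∑' s, AQit p h δ k s ≤ ENNReal.ofReal ((2 * lamSup) ^ k) := by
      have hm := AQit_mass lamSup hp01 hrow hdiag_bd δ hh k
      rw [hδ] at hm ⊢
      rw [delta_mass i, one_mul] at hm
      rwa [ENNReal.ofReal_pow (le_of_lt h2ls)]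
    rw [split_at (fun s => AQit p h δ k s * ∑' t, (if n ≤ t then Qe p h s t else 0)) N]
    have piece1 : (∑' s, if s < N then
          AQit p h δ k s * ∑' t, (if n ≤ t then Qe p h s t else 0) else 0)
        ≤ ENNReal.ofReal (ε / 2) := by
      calc (∑' s, if s < N then
            AQit p h δ k s * ∑' t, (if n ≤ t then Qe p h s t else 0) else 0)
          ≤ ∑' s, AQit p h δ k s * ENNReal.ofReal (ε / (2 * (2 * lamSup) ^ k)) := by
            apply ENNReal.tsum_le_tsum
            intro s
            by_cases hsN : s < N
            · rw [if_pos hsN]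
              exact mul_le_mul_right (hf s h hh n
                (le_trans (Finset.le_sup (Finset.mem_range.2 hsN)) hn)) _
            · rw [if_neg hsN]; exact zero_le
        _ = (∑' s, AQit p h δ k s) * ENNReal.ofReal (ε / (2 * (2 * lamSup) ^ k)) :=
            ENNReal.tsum_mul_right
        _ ≤ ENNReal.ofReal ((2 * lamSup) ^ k) * ENNReal.ofReal (ε / (2 * (2 * lamSup) ^ k)) :=
            mul_le_mul_left mass _
        _ = ENNReal.ofReal ((2 * lamSup) ^ k * (ε / (2 * (2 * lamSup) ^ k))) :=
            (ENNReal.ofReal_mul (le_of_lt hpow)).symm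
        _ = ENNReal.ofReal (ε / 2) := by
            congr 1
            field_simp
    have piece2 : (∑' s, if N ≤ s then
          AQit p h δ k s * ∑' t, (if n ≤ t then Qe p h s t else 0) else 0)
        ≤ ENNReal.ofReal (ε / 2) := by
      calc (∑' s, if N ≤ s then
            AQit p h δ k s * ∑' t, (if n ≤ t then Qe p h s t else 0) else 0)
          ≤ ∑' s, (if N ≤ s then AQit p h δ k s else 0) * ENNReal.ofReal (2 * lamSup) := by
            apply ENNReal.tsum_le_tsum
            intro s
            by_cases hsN : N ≤ s
            · rw [if_pos hsN, if_pos hsN]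
              exact mul_le_mul_right (Qe_tail_le lamSup hp01 hrow hdiag_bd s n hh) _
            · rw [if_neg hsN, if_neg hsN, zero_mul]
        _ = (∑' s, if N ≤ s then AQit p h δ k s else 0) * ENNReal.ofReal (2 * lamSup) :=
            ENNReal.tsum_mul_right
        _ ≤ ENNReal.ofReal (ε / (2 * (2 * lamSup))) * ENNReal.ofReal (2 * lamSup) :=
            mul_le_mul_left (hN h hh N (le_refl N)) _
        _ = ENNReal.ofReal ((ε / (2 * (2 * lamSup))) * (2 * lamSup)) :=
            (ENNReal.ofReal_mul (le_of_lt hε1)).symm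
        _ = ENNReal.ofReal (ε / 2) := by
            congr 1
            field_simp
    calc _ ≤ ENNReal.ofReal (ε / 2) + ENNReal.ofReal (ε / 2) := add_le_add piece1 piece2
      _ = ENNReal.ofReal ε := by
          rw [← ENNReal.ofReal_add (by positivity) (by positivity)]
          norm_num

lemma real_tsum_le {ι : Type*} (f : ι → ℝ) (hf : ∀ x, 0 ≤ f x) {c : ℝ} (hc : 0 ≤ c)
    (hle : ∑' x, ENNReal.ofReal (f x) ≤ ENNReal.ofReal c) : ∑' x, f x ≤ c := by
  by_cases hs : Summable f
  · refine (ENNReal.ofReal_le_ofReal_iff hc).1 ?_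
    rw [ENNReal.ofReal_tsum_of_nonneg hf hs]
    exact hle
  · rw [tsum_eq_zero_of_not_summable hs]; exact hc

/-- Under the standing assumptions on the generator `(λ_{ij})` (with row sums
`λ_i ∈ [λ_*, λ^*]`, `λ_* > 0`) and on the transition probabilities `p_{ij}(h)`
(row-stochastic, continuous in `h ∈ (0,1]`, `p_{ij}(h)/h → λ_{ij}` for `i ≠ j`,
`(1 − p_{ii}(h))/h → λ_i` and `(1 − p_{ii}(h))/h ≤ 2λ^*`), for fixed `i` and `m ≥ 1`
the iterated series
`S_{1,i,m}(h) = Σ_{j_1 ≠ i} Σ_{j_2 ≠ j_1} … Σ_{j_m ≠ j_{m−1}} ∏_{k=1}^m p_{j_{k−1} j_k}(h)/h`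
(with `j_0 = i`) converges uniformly in `h ∈ (0,1]`: for every `ε > 0` there exists `n₀`
such that for all `h ∈ (0,1]` and all `n ≥ n₀`, the subsum over all tuples `(j_1, …, j_m)`
with `max_k j_k ≥ n` is less than `ε`. -/
theorem uniform_convergence_S1 (lam : ℕ → ℕ → ℝ) (lamTot : ℕ → ℝ) (lamStar lamSup : ℝ)
    (hlam_nn : ∀ i j, i ≠ j → 0 ≤ lam i j)
    (hlamTot : ∀ i, lamTot i = ∑' j, if j = i then 0 else lam i j)
    (hStar : 0 < lamStar) (hStarLe : ∀ i, lamStar ≤ lamTot i)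
    (hSupLe : ∀ i, lamTot i ≤ lamSup)
    (p : ℕ → ℕ → ℝ → ℝ)
    (hp01 : ∀ i j, ∀ h ∈ Set.Ioc (0:ℝ) 1, p i j h ∈ Set.Icc (0:ℝ) 1)
    (hrow : ∀ i, ∀ h ∈ Set.Ioc (0:ℝ) 1, ∑' j, p i j h = 1)
    (hcont : ∀ i j, ContinuousOn (fun h => p i j h) (Set.Ioc (0:ℝ) 1))
    (hlim : ∀ i j, i ≠ j →
      Tendsto (fun h => p i j h / h) (nhdsWithin 0 (Set.Ioi 0)) (nhds (lam i j)))
    (hdiag : ∀ i,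
      Tendsto (fun h => (1 - p i i h) / h) (nhdsWithin 0 (Set.Ioi 0)) (nhds (lamTot i)))
    (hdiag_bd : ∀ i, ∀ h ∈ Set.Ioc (0:ℝ) 1, (1 - p i i h) / h ≤ 2 * lamSup)
    (i m : ℕ) (hm : 1 ≤ m) :
    ∀ ε > 0, ∃ n₀ : ℕ, ∀ h ∈ Set.Ioc (0:ℝ) 1, ∀ n ≥ n₀,
      (∑' j : Fin m → ℕ,
        Set.indicator
          {j : Fin m → ℕ |
            (∀ k < m, chainExt i m j k ≠ chainExt i m j (k + 1)) ∧ (∃ k, n ≤ j k)}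
          (fun j => ∏ k ∈ Finset.range m,
            p (chainExt i m j k) (chainExt i m j (k + 1)) h / h) j)
        < ε := by
  intro ε hε
  have hlamSup : 0 < lamSup := lt_of_lt_of_le hStar (le_trans (hStarLe 0) (hSupLe 0))
  have hbase : (0:ℝ) < 1 + 2 * lamSup := by linarith
  set K : ℝ := (1 + 2 * lamSup) ^ m with hKdef
  have hK : 0 < K := pow_pos hbase m
  have hm' : (0:ℝ) < (m : ℝ) := by exact_mod_cast hm
  have hε' : (0:ℝ) < ε / (2 * m * K) := by positivity
  have hV : ∀ r : ℕ, ∃ n₀ : ℕ, ∀ h ∈ Set.Ioc (0:ℝ) 1, ∀ n ≥ n₀,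
      ∑' t, (if n ≤ t then AQit p h (fun s => if s = i then 1 else 0) (r+1) t else 0)
        ≤ ENNReal.ofReal (ε / (2 * m * K)) :=
    fun r => Vtail lam lamTot lamStar lamSup hlamTot hStar hStarLe hlamSup hp01 hrow hcont
      hlim hdiag hdiag_bd i (r+1) _ hε'
  choose g hg using hV
  refine ⟨Finset.sup (Finset.range m) g, fun h hh n hn => ?_⟩
  set δ : ℕ → ℝ≥0∞ := fun s => if s = i then 1 else 0 with hδ
  set S := {j : Fin m → ℕ |
    (∀ k < m, chainExt i m j k ≠ chainExt i m j (k + 1)) ∧ (∃ k, n ≤ j k)} with hS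
  set F : (Fin m → ℕ) → ℝ := fun j => ∏ k ∈ Finset.range m,
    p (chainExt i m j k) (chainExt i m j (k + 1)) h / h with hF
  -- pointwise bound in ENNReal
  have stepA : ∀ j : Fin m → ℕ, ENNReal.ofReal (Set.indicator S F j)
      ≤ (if ∃ k, n ≤ j k then prodQ p h i m j else 0) := by
    intro j
    by_cases hj : j ∈ S
    · rw [Set.indicator_of_mem hj]
      obtain ⟨hj1, hj2⟩ := hj
      rw [if_pos hj2]
      apply le_of_eq
      rw [hF]
      rw [ENNReal.ofReal_prod_of_nonneg (fun k _ =>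
        div_nonneg (hp01 _ _ h hh).1 hh.1.le)]
      unfold prodQ
      apply Finset.prod_congr rfl
      intro k hk
      rw [Finset.mem_range] at hk
      unfold Qe qf
      rw [if_neg (fun he => hj1 k hk he.symm)]
    · rw [Set.indicator_of_notMem hj, ENNReal.ofReal_zero]
      exact zero_le
  have stepB : ∑' j : Fin m → ℕ, (if ∃ k, n ≤ j k then prodQ p h i m j else 0)
      = ∑' s, δ s * Te p h s m n := by
    have h1 : ∀ s, δ s * Te p h s m n = (if s = i then Te p h i m n else 0) := by
      intro s
      rw [hδ]
      by_cases hs : s = i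
      · subst hs; simp
      · simp [hs]
    rw [tsum_congr h1, tsum_ite_eq]
    rfl
  have stepD := lemG lamSup hp01 hrow hdiag_bd m δ n hh
  have stepE : ∑ r ∈ Finset.range m,
      (∑' t, if n ≤ t then AQit p h δ (r+1) t else 0)
        * ENNReal.ofReal (2 * lamSup) ^ (m - 1 - r)
      ≤ ENNReal.ofReal (ε / 2) := by
    have hterm : ∀ r ∈ Finset.range m,
        (∑' t, if n ≤ t then AQit p h δ (r+1) t else 0)
          * ENNReal.ofReal (2 * lamSup) ^ (m - 1 - r)
        ≤ ENNReal.ofReal (ε / (2 * m * K)) * ENNReal.ofReal K := by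
      intro r hr
      rw [Finset.mem_range] at hr
      apply mul_le_mul'
      · exact hg r h hh n (le_trans (Finset.le_sup (Finset.mem_range.2 hr)) hn)
      · rw [← ENNReal.ofReal_pow (by linarith)]
        apply ENNReal.ofReal_le_ofReal
        calc (2 * lamSup) ^ (m - 1 - r) ≤ (1 + 2 * lamSup) ^ (m - 1 - r) :=
              pow_le_pow_left₀ (by linarith) (by linarith) _
          _ ≤ (1 + 2 * lamSup) ^ m := pow_le_pow_right₀ (by linarith) (by omega)
    calc ∑ r ∈ Finset.range m, (∑' t, if n ≤ t then AQit p h δ (r+1) t else 0)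
          * ENNReal.ofReal (2 * lamSup) ^ (m - 1 - r)
        ≤ ∑ r ∈ Finset.range m, ENNReal.ofReal (ε / (2 * m * K)) * ENNReal.ofReal K :=
          Finset.sum_le_sum hterm
      _ = (m : ℝ≥0∞) * (ENNReal.ofReal (ε / (2 * m * K)) * ENNReal.ofReal K) := by
          rw [Finset.sum_const, Finset.card_range, nsmul_eq_mul]
      _ = ENNReal.ofReal ((m : ℝ) * ((ε / (2 * m * K)) * K)) := by
          rw [← ENNReal.ofReal_mul hε'.le, ← ENNReal.ofReal_natCast m,
            ← ENNReal.ofReal_mul (by positivity)]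
      _ = ENNReal.ofReal (ε / 2) := by
          congr 1
          field_simp
  -- put everything together
  have hENN : ∑' j : Fin m → ℕ, ENNReal.ofReal (Set.indicator S F j)
      ≤ ENNReal.ofReal (ε / 2) := by
    calc ∑' j : Fin m → ℕ, ENNReal.ofReal (Set.indicator S F j)
        ≤ ∑' j : Fin m → ℕ, (if ∃ k, n ≤ j k then prodQ p h i m j else 0) :=
          ENNReal.tsum_le_tsum stepA
      _ = ∑' s, δ s * Te p h s m n := stepB
      _ ≤ _ := stepD
      _ ≤ ENNReal.ofReal (ε / 2) := stepE
  have hreal : ∑' j : Fin m → ℕ, Set.indicator S F j ≤ ε / 2 := by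
    apply real_tsum_le _ _ (by linarith) hENN
    intro j
    apply Set.indicator_apply_nonneg
    intro hj
    exact Finset.prod_nonneg fun k _ => div_nonneg (hp01 _ _ h hh).1 hh.1.le
  calc ∑' j : Fin m → ℕ, Set.indicator S F j ≤ ε / 2 := hreal
    _ < ε := by linarith
end
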